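/- Convergence theorem for stable differentiation: let f ∈ C¹([0,1]) with f(0)=0, u = f′, and suppose for each δ ∈ (0,δ₀) we have f_δ ∈ L²(0,1) with ‖f_δ − f‖ ≤ δ. If α(δ) > 0 satisfies α(δ) → 0 and δ/α(δ) → 0 as δ → 0, then u_δ := (α(δ)I + A)⁻¹ f_δ satisfies ‖u_δ − u‖ → 0 as δ → 0. -/

import Mathlib

/-!
Write `k_a(t) = e^{-t/a}` for `t ≥ 0`. The explicit inverse is `(aI + A)⁻¹ g = g/a - a⁻² (k_a ∗ g)`,
and since `‖k_a‖₁ = a`, Schur's test gives `‖k_a ∗ g‖ ≤ a ‖g‖`, so `‖(aI + A)⁻¹‖ ≤ 2/a`. This bounds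
the noise term `(αI + A)⁻¹(f_δ - f)` by `2δ/α`. For `f ∈ C¹` with `f(0) = 0`, integration by parts
gives `(aI + A)⁻¹ f = a⁻¹ (k_a ∗ f')`. This is an exponential moving average of `u = f'`: it is
bounded by `sup |u|` and tends to `u` at every point of `(0, 1]`. Dominated convergence then gives
convergence in `L²`.
-/

open MeasureTheory intervalIntegral Real Filter Set
open scoped ENNReal Topology

theorem ENNReal.lintegral_mul_sq_le {α : Type*} [MeasurableSpace α] {μ : Measure α}
    {w g : α → ℝ≥0∞} (hw : AEMeasurable w μ) (hg : AEMeasurable g μ) :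
    (∫⁻ x, w x * g x ∂μ) ^ 2 ≤ (∫⁻ x, w x ∂μ) * ∫⁻ x, w x * g x ^ 2 ∂μ := by
  have hsqrt : ∀ y : ℝ≥0∞, (y ^ 2) ^ (2⁻¹ : ℝ) = y := fun y => by
    simpa using ENNReal.pow_rpow_inv_natCast (x := y) two_ne_zero
  have hsq : ∀ y : ℝ≥0∞, (y ^ (2⁻¹ : ℝ)) ^ 2 = y := fun y => by
    simpa using ENNReal.rpow_inv_natCast_pow (x := y) two_ne_zero
  have hsplit : ∀ x, w x ^ (2⁻¹ : ℝ) * (w x * g x ^ 2) ^ (2⁻¹ : ℝ) = w x * g x := fun x => by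
    rw [← ENNReal.mul_rpow_of_nonneg _ _ (by norm_num), ← mul_assoc, ← sq, ← mul_pow, hsqrt]
  have hcs := ENNReal.lintegral_mul_norm_pow_le hw (hw.mul (hg.pow_const 2))
    (p := 2⁻¹) (q := 2⁻¹) (by norm_num) (by norm_num) (by norm_num)
  simp only [Pi.mul_apply, hsplit] at hcs
  calc (∫⁻ x, w x * g x ∂μ) ^ 2
      ≤ ((∫⁻ x, w x ∂μ) ^ (2⁻¹ : ℝ) * (∫⁻ x, w x * g x ^ 2 ∂μ) ^ (2⁻¹ : ℝ)) ^ 2 := by gcongr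
    _ = (∫⁻ x, w x ∂μ) * ∫⁻ x, w x * g x ^ 2 ∂μ := by
      rw [mul_pow, hsq, hsq]

theorem lintegral_sq_lintegral_mul_le {α β : Type*} [MeasurableSpace α] [MeasurableSpace β]
    {μ : Measure α} {ν : Measure β} [SFinite μ] [SFinite ν] {K : α → β → ℝ≥0∞}
    (hK : Measurable (Function.uncurry K)) {g : β → ℝ≥0∞} (hg : AEMeasurable g ν) {A B : ℝ≥0∞}
    (hA : ∀ x, ∫⁻ s, K x s ∂ν ≤ A) (hB : ∀ s, ∫⁻ x, K x s ∂μ ≤ B) :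
    ∫⁻ x, (∫⁻ s, K x s * g s ∂ν) ^ 2 ∂μ ≤ A * B * ∫⁻ s, g s ^ 2 ∂ν := by
  wlog hgm : Measurable g generalizing g
  · have hK' : ∀ x, ∫⁻ s, K x s * g s ∂ν = ∫⁻ s, K x s * hg.mk g s ∂ν := fun x =>
      lintegral_congr_ae (hg.ae_eq_mk.mono fun s hs => by simp only [hs])
    have hg2 : ∫⁻ s, g s ^ 2 ∂ν = ∫⁻ s, hg.mk g s ^ 2 ∂ν :=
      lintegral_congr_ae (hg.ae_eq_mk.mono fun s hs => by simp only [hs])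
    simp_rw [hK', hg2]
    exact this hg.measurable_mk.aemeasurable hg.measurable_mk
  have hKx : ∀ x, Measurable (K x) := fun x => hK.comp measurable_prodMk_left
  calc ∫⁻ x, (∫⁻ s, K x s * g s ∂ν) ^ 2 ∂μ
      ≤ ∫⁻ x, A * ∫⁻ s, K x s * g s ^ 2 ∂ν ∂μ := by
        refine lintegral_mono fun x => ?_
        refine (ENNReal.lintegral_mul_sq_le (hKx x).aemeasurable hg).trans ?_
        gcongr
        exact hA x
    _ = A * ∫⁻ s, (∫⁻ x, K x s ∂μ) * g s ^ 2 ∂ν := by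
        have hKg : Measurable (Function.uncurry fun x s => K x s * g s ^ 2) :=
          hK.mul ((hgm.pow_const 2).comp measurable_snd)
        rw [lintegral_const_mul _ (by exact hKg.lintegral_prod_right'),
          lintegral_lintegral_swap hKg.aemeasurable]
        congr 1
        exact lintegral_congr fun s => lintegral_mul_const _ (hK.comp measurable_prodMk_right)
    _ ≤ A * ∫⁻ s, B * g s ^ 2 ∂ν := by
        gcongr with s
        exact hB s
    _ = A * B * ∫⁻ s, g s ^ 2 ∂ν := by
        rw [lintegral_const_mul _ (hgm.pow_const 2), mul_assoc]

theorem lintegral_sq_lintegral_convolution_le {G : Type*} [MeasurableSpace G] [AddCommGroup G]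
    [MeasurableAdd₂ G] [MeasurableNeg G] {μ : Measure G} [SFinite μ] [μ.IsAddLeftInvariant]
    [μ.IsNegInvariant] {k g : G → ℝ≥0∞} (hk : Measurable k) (hg : AEMeasurable g μ) :
    ∫⁻ x, (∫⁻ s, k (x - s) * g s ∂μ) ^ 2 ∂μ ≤ (∫⁻ t, k t ∂μ) ^ 2 * ∫⁻ s, g s ^ 2 ∂μ := by
  rw [sq (∫⁻ t, k t ∂μ)]
  exact lintegral_sq_lintegral_mul_le (K := fun x s => k (x - s)) (hk.comp measurable_sub) hg
    (fun x => (lintegral_sub_left_eq_self k x).le) (fun s => (lintegral_sub_right_eq_self k s).le)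

theorem eLpNorm_two_le_of_lintegral_sq_le {α β E F : Type*} [MeasurableSpace α]
    [MeasurableSpace β] [NormedAddCommGroup E] [NormedAddCommGroup F] {μ : Measure α}
    {ν : Measure β} {f : α → E} {g : β → F} {C : ℝ≥0∞}
    (h : ∫⁻ x, ‖f x‖ₑ ^ 2 ∂μ ≤ C ^ 2 * ∫⁻ x, ‖g x‖ₑ ^ 2 ∂ν) :
    eLpNorm f 2 μ ≤ C * eLpNorm g 2 ν := by
  have h2 := eLpNorm_nnreal_pow_eq_lintegral (f := f) (μ := μ) (p := 2) two_ne_zero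
  have h2' := eLpNorm_nnreal_pow_eq_lintegral (f := g) (μ := ν) (p := 2) two_ne_zero
  norm_num at h2 h2'
  rwa [← ENNReal.pow_le_pow_left_iff two_ne_zero, mul_pow, h2, h2']

theorem tendsto_eLpNorm_of_dominated {α ι E : Type*} [MeasurableSpace α] [NormedAddCommGroup E]
    {μ : Measure α} [IsFiniteMeasure μ] {l : Filter ι} [l.IsCountablyGenerated] {F : ι → α → E}
    {C : ℝ} {p : ℝ≥0∞} (hp : p ≠ ∞) (hF : ∀ᶠ i in l, AEStronglyMeasurable (F i) μ)
    (hbound : ∀ᶠ i in l, ∀ᵐ x ∂μ, ‖F i x‖ ≤ C)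
    (hlim : ∀ᵐ x ∂μ, Tendsto (fun i => F i x) l (𝓝 0)) :
    Tendsto (fun i => eLpNorm (F i) p μ) l (𝓝 0) := by
  rcases eq_or_ne p 0 with rfl | hp0
  · simpa using tendsto_const_nhds
  simp_rw [eLpNorm_eq_lintegral_rpow_enorm_toReal hp0 hp]
  have hpos : 0 < p.toReal := ENNReal.toReal_pos hp0 hp
  have hint : Tendsto (fun i => ∫⁻ x, ‖F i x‖ₑ ^ p.toReal ∂μ) l (𝓝 0) := by
    have := tendsto_lintegral_filter_of_dominated_convergence' (μ := μ) (l := l)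
      (F := fun i x => ‖F i x‖ₑ ^ p.toReal) (f := fun _ => 0)
      (fun _ => ENNReal.ofReal C ^ p.toReal) ?_ ?_ ?_ ?_
    · simpa [hpos] using this
    · filter_upwards [hF] with i hi using hi.enorm.pow_const _
    · filter_upwards [hbound] with i hi
      filter_upwards [hi] with x hx
      gcongr
      rw [← ofReal_norm]
      exact ENNReal.ofReal_le_ofReal hx
    · rw [lintegral_const]
      exact ENNReal.mul_ne_top (by simp [hpos.le]) (measure_ne_top μ univ)
    · filter_upwards [hlim] with x hx
      simpa [hpos] using hx.enorm.ennrpow_const p.toReal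
  simpa [hpos] using hint.ennrpow_const (1 / p.toReal)

noncomputable def expConv (a : ℝ) (g : ℝ → ℝ) (x : ℝ) : ℝ :=
  ∫ s in (0:ℝ)..x, exp ((s - x) / a) * g s

theorem exp_neg_div_mul_integral_eq_expConv (a : ℝ) (g : ℝ → ℝ) (x : ℝ) :
    exp (-x / a) * ∫ s in (0:ℝ)..x, exp (s / a) * g s = expConv a g x := by
  rw [expConv, ← intervalIntegral.integral_const_mul]
  refine integral_congr fun s _ => ?_
  rw [← mul_assoc, ← exp_add, sub_div, neg_div, neg_add_eq_sub]

theorem integral_exp_sub_div {a : ℝ} (ha : a ≠ 0) (x : ℝ) :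
    ∫ s in (0:ℝ)..x, exp ((s - x) / a) = a * (1 - exp (-x / a)) := by
  simp_rw [sub_div]
  rw [integral_comp_div_sub (f := exp) ha, integral_exp, smul_eq_mul, sub_self, exp_zero,
    zero_div, zero_sub, neg_div]

theorem continuousOn_expConv {g : ℝ → ℝ} (hg : IntegrableOn g (Icc 0 1)) (a : ℝ) :
    ContinuousOn (expConv a g) (Icc 0 1) := by
  have hprim : ContinuousOn (fun x => ∫ s in (0:ℝ)..x, exp (s / a) * g s) (Icc 0 1) := by
    simpa using continuousOn_primitive_interval (a := 0) (b := 1)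
      (by simpa using hg.continuousOn_mul (by fun_prop) isCompact_Icc)
  simp_rw [← funext (exp_neg_div_mul_integral_eq_expConv a g)]
  exact (by fun_prop : Continuous fun x : ℝ => exp (-x / a)).continuousOn.mul hprim

theorem aestronglyMeasurable_expConv {g : ℝ → ℝ} (hg : IntegrableOn g (Icc 0 1)) (a : ℝ) :
    AEStronglyMeasurable (expConv a g) (volume.restrict (Ioc 0 1)) :=
  ((continuousOn_expConv hg a).mono Ioc_subset_Icc_self).aestronglyMeasurable measurableSet_Ioc

theorem intervalIntegrable_exp_mul {g : ℝ → ℝ} (hg : IntegrableOn g (Icc 0 1)) {x : ℝ}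
    (hx : x ∈ Icc (0:ℝ) 1) (a c : ℝ) :
    IntervalIntegrable (fun s => exp ((s - c) / a) * g s) volume 0 x :=
  (intervalIntegrable_iff_integrableOn_Icc_of_le hx.1).2 <|
    (hg.mono_set (Icc_subset_Icc le_rfl hx.2)).continuousOn_mul
      (by fun_prop : Continuous fun s => exp ((s - c) / a)).continuousOn isCompact_Icc

theorem expConv_sub {g h : ℝ → ℝ} (hg : IntegrableOn g (Icc 0 1)) (hh : IntegrableOn h (Icc 0 1))
    (a : ℝ) {x : ℝ} (hx : x ∈ Icc (0:ℝ) 1) :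
    expConv a (g - h) x = expConv a g x - expConv a h x := by
  rw [expConv, expConv, expConv, ← integral_sub (intervalIntegrable_exp_mul hg hx a x)
    (intervalIntegrable_exp_mul hh hx a x)]
  simp only [Pi.sub_apply, mul_sub]

theorem expConv_eq_of_hasDerivWithinAt {f u : ℝ → ℝ} {a x : ℝ} (ha : a ≠ 0) (hf0 : f 0 = 0)
    (hf : ∀ s ∈ uIcc 0 x, HasDerivWithinAt f (u s) (uIcc 0 x) s)
    (hu : IntervalIntegrable u volume 0 x) :
    expConv a f x = a * (f x - expConv a u x) := by
  have hE : ∀ s ∈ uIcc 0 x, HasDerivWithinAt (fun s => a * exp ((s - x) / a))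
      (exp ((s - x) / a)) (uIcc 0 x) s := fun s _ => by
    have := (((hasDerivAt_id' s).sub_const x).div_const a).exp.const_mul a
    exact this.hasDerivWithinAt.congr_deriv (by field_simp)
  have hibp := integral_mul_deriv_eq_deriv_mul_of_hasDerivWithinAt hE hf
    ((by fun_prop : Continuous fun s => exp ((s - x) / a)).intervalIntegrable 0 x) hu
  simp only [intervalIntegral.integral_const_mul, mul_assoc, hf0, mul_zero, sub_self, zero_div,
    exp_zero, one_mul, sub_zero] at hibp
  rw [expConv, expConv]
  linear_combination hibp

noncomputable def expKernel (a t : ℝ) : ℝ≥0∞ :=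
  (Ici 0).indicator (fun t => ENNReal.ofReal (exp (-t / a))) t

theorem measurable_expKernel (a : ℝ) : Measurable (expKernel a) :=
  (by fun_prop : Measurable fun t : ℝ => ENNReal.ofReal (exp (-t / a))).indicator measurableSet_Ici

theorem lintegral_expKernel {a : ℝ} (ha : 0 < a) : ∫⁻ t, expKernel a t = ENNReal.ofReal a := by
  have hexp : ∀ t : ℝ, exp (-t / a) = exp (-a⁻¹ * t) := fun t => by ring_nf
  have hint : IntegrableOn (fun t : ℝ => exp (-t / a)) (Ici 0) := by
    simp_rw [hexp]
    exact (integrableOn_Ici_iff_integrableOn_Ioi).mpr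
      (integrableOn_exp_mul_Ioi (neg_lt_zero.2 (inv_pos.2 ha)) 0)
  unfold expKernel
  rw [lintegral_indicator measurableSet_Ici, ← ofReal_integral_eq_lintegral_ofReal hint
    (ae_of_all _ fun t => (exp_pos _).le), integral_Ici_eq_integral_Ioi]
  simp_rw [hexp]
  rw [integral_exp_mul_Ioi (neg_lt_zero.2 (inv_pos.2 ha))]
  congr 1
  field_simp
  simp

theorem enorm_expConv_le (a : ℝ) (g : ℝ → ℝ) {x : ℝ} (hx : x ∈ Icc (0:ℝ) 1) :
    ‖expConv a g x‖ₑ ≤ ∫⁻ s, expKernel a (x - s) * (Ioc 0 1).indicator (fun s => ‖g s‖ₑ) s := by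
  rw [expConv, integral_of_le hx.1]
  refine (enorm_integral_le_lintegral_enorm _).trans ?_
  rw [← lintegral_indicator measurableSet_Ioc]
  refine lintegral_mono fun s => ?_
  by_cases hs : s ∈ Ioc 0 x
  · have hs1 : s ∈ Ioc (0:ℝ) 1 := ⟨hs.1, hs.2.trans hx.2⟩
    have hk : expKernel a (x - s) = ENNReal.ofReal (exp ((s - x) / a)) := by
      rw [expKernel, indicator_of_mem (show x - s ∈ Ici 0 from sub_nonneg.2 hs.2), neg_sub]
    rw [indicator_of_mem hs, indicator_of_mem hs1, hk, enorm_mul,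
      Real.enorm_of_nonneg (exp_pos _).le]
  · rw [indicator_of_notMem hs]
    exact zero_le

theorem eLpNorm_expConv_le {a : ℝ} (ha : 0 < a) {g : ℝ → ℝ}
    (hg : AEStronglyMeasurable g (volume.restrict (Ioc 0 1))) :
    eLpNorm (expConv a g) 2 (volume.restrict (Ioc 0 1))
      ≤ ENNReal.ofReal a * eLpNorm g 2 (volume.restrict (Ioc 0 1)) := by
  set G : ℝ → ℝ≥0∞ := (Ioc 0 1).indicator (fun s => ‖g s‖ₑ)
  have hG : AEMeasurable G volume := (aemeasurable_indicator_iff measurableSet_Ioc).2 hg.enorm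
  have hG2 : ∫⁻ s, G s ^ 2 = ∫⁻ s in Ioc 0 1, ‖g s‖ₑ ^ 2 := by
    rw [← lintegral_indicator measurableSet_Ioc]
    congr 1
    ext s
    by_cases hs : s ∈ Ioc (0:ℝ) 1 <;> simp [G, hs]
  refine eLpNorm_two_le_of_lintegral_sq_le ?_
  calc ∫⁻ x in Ioc 0 1, ‖expConv a g x‖ₑ ^ 2
      ≤ ∫⁻ x in Ioc 0 1, (∫⁻ s, expKernel a (x - s) * G s) ^ 2 :=
        setLIntegral_mono' measurableSet_Ioc fun x hx =>
          pow_le_pow_left₀ zero_le (enorm_expConv_le a g (Ioc_subset_Icc_self hx)) 2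
    _ ≤ ∫⁻ x, (∫⁻ s, expKernel a (x - s) * G s) ^ 2 := setLIntegral_le_lintegral _ _
    _ ≤ (∫⁻ t, expKernel a t) ^ 2 * ∫⁻ s, G s ^ 2 :=
        lintegral_sq_lintegral_convolution_le (measurable_expKernel a) hG
    _ = ENNReal.ofReal a ^ 2 * ∫⁻ x in Ioc 0 1, ‖g x‖ₑ ^ 2 := by
        rw [lintegral_expKernel ha, hG2]

theorem tendsto_const_div_nhdsGT_zero {η : ℝ} (hη : 0 < η) :
    Tendsto (fun a => η / a) (𝓝[>] 0) atTop := by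
  simpa [div_eq_mul_inv] using tendsto_inv_nhdsGT_zero.const_mul_atTop hη

theorem tendsto_inv_mul_exp_neg_div {η : ℝ} (hη : 0 < η) :
    Tendsto (fun a => a⁻¹ * exp (-η / a)) (𝓝[>] 0) (𝓝 0) := by
  have h := ((tendsto_pow_mul_exp_neg_atTop_nhds_zero 1).comp
    (tendsto_const_div_nhdsGT_zero hη)).const_mul η⁻¹
  rw [mul_zero] at h
  refine h.congr' (eventually_nhdsWithin_of_forall fun a (ha : 0 < a) => ?_)
  simp only [Function.comp_apply, pow_one, neg_div]
  field_simp

theorem abs_expConv_le {u : ℝ → ℝ} {a x M : ℝ} (ha : 0 < a) (hx : 0 ≤ x)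
    (hM : ∀ s ∈ Icc 0 x, |u s| ≤ M) : |expConv a u x| ≤ a * M := by
  have hM0 : 0 ≤ M := (abs_nonneg _).trans (hM x ⟨hx, le_rfl⟩)
  calc |expConv a u x| ≤ ∫ s in (0:ℝ)..x, exp ((s - x) / a) * M := by
        rw [← Real.norm_eq_abs, expConv]
        refine norm_integral_le_of_norm_le hx (ae_of_all _ fun s hs => ?_)
          ((by fun_prop : Continuous fun s => exp ((s - x) / a) * M).intervalIntegrable 0 x)
        rw [norm_mul, Real.norm_of_nonneg (exp_pos _).le, Real.norm_eq_abs]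
        exact mul_le_mul_of_nonneg_left (hM s ⟨hs.1.le, hs.2⟩) (exp_pos _).le
    _ = a * M * (1 - exp (-x / a)) := by
        rw [intervalIntegral.integral_mul_const, integral_exp_sub_div ha.ne']
        ring
    _ ≤ a * M := mul_le_of_le_one_right (by positivity) (by linarith [exp_pos (-x / a)])

theorem abs_integral_exp_mul_sub_le {u : ℝ → ℝ} {a x ε η M : ℝ} (ha : 0 < a) (hx : 0 ≤ x)
    (hM : ∀ s ∈ Icc 0 x, |u s| ≤ M) (hε : 0 ≤ ε)
    (hη : ∀ s ∈ Icc 0 x, x - s < η → |u s - u x| ≤ ε) :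
    |∫ s in (0:ℝ)..x, exp ((s - x) / a) * (u s - u x)| ≤ ε * a + 2 * M * x * exp (-η / a) := by
  have hM0 : 0 ≤ M := (abs_nonneg _).trans (hM x ⟨hx, le_rfl⟩)
  have hexp : Continuous fun s => exp ((s - x) / a) := by fun_prop
  calc _ ≤ ∫ s in (0:ℝ)..x, (ε * exp ((s - x) / a) + 2 * M * exp (-η / a)) := by
        rw [← Real.norm_eq_abs]
        refine norm_integral_le_of_norm_le hx (ae_of_all _ fun s hs => ?_)
          (((hexp.const_mul ε).add continuous_const).intervalIntegrable 0 x)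
        have hsI : s ∈ Icc 0 x := ⟨hs.1.le, hs.2⟩
        rw [norm_mul, Real.norm_of_nonneg (exp_pos _).le, Real.norm_eq_abs]
        by_cases hs' : x - s < η
        · have := mul_le_mul_of_nonneg_left (hη s hsI hs') (exp_pos ((s - x) / a)).le
          nlinarith [exp_pos (-η / a)]
        · -- away from `x` the kernel is at most `e^{-η/a}`
          have h1 : exp ((s - x) / a) ≤ exp (-η / a) :=
            exp_le_exp.2 (div_le_div_of_nonneg_right (by linarith) ha.le)
          have h2 : |u s - u x| ≤ 2 * M := by
            linarith [abs_sub (u s) (u x), hM s hsI, hM x ⟨hx, le_rfl⟩]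
          nlinarith [exp_pos ((s - x) / a), mul_le_mul h1 h2 (abs_nonneg _) (exp_pos _).le]
    _ = ε * (a * (1 - exp (-x / a))) + 2 * M * x * exp (-η / a) := by
        rw [integral_add ((hexp.const_mul ε).intervalIntegrable 0 x) intervalIntegrable_const,
          intervalIntegral.integral_const_mul, integral_exp_sub_div ha.ne',
          intervalIntegral.integral_const, smul_eq_mul]
        ring
    _ ≤ ε * a + 2 * M * x * exp (-η / a) := by
        gcongr
        exact mul_le_of_le_one_right ha.le (by linarith [exp_pos (-x / a)])

theorem abs_inv_mul_expConv_sub_le {u : ℝ → ℝ} {a x ε η M : ℝ} (ha : 0 < a) (hx : 0 ≤ x)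
    (hu : IntervalIntegrable u volume 0 x) (hM : ∀ s ∈ Icc 0 x, |u s| ≤ M) (hε : 0 ≤ ε)
    (hη : ∀ s ∈ Icc 0 x, x - s < η → |u s - u x| ≤ ε) :
    |a⁻¹ * expConv a u x - u x| ≤ ε + 2 * M * x * (a⁻¹ * exp (-η / a)) + M * exp (-x / a) := by
  have hexp : Continuous fun s => exp ((s - x) / a) := by fun_prop
  set I := ∫ s in (0:ℝ)..x, exp ((s - x) / a) * (u s - u x)
  have hI : I = expConv a u x - u x * (a * (1 - exp (-x / a))) := by
    simp only [I, mul_sub]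
    rw [integral_sub (hu.continuousOn_mul hexp.continuousOn)
        ((hexp.intervalIntegrable 0 x).mul_const _),
      intervalIntegral.integral_mul_const, integral_exp_sub_div ha.ne', expConv]
    ring
  have hsplit : a⁻¹ * expConv a u x - u x = a⁻¹ * I - u x * exp (-x / a) := by
    rw [hI]
    field_simp
    ring
  rw [hsplit]
  calc |a⁻¹ * I - u x * exp (-x / a)| ≤ a⁻¹ * |I| + M * exp (-x / a) := by
        refine (abs_sub _ _).trans (add_le_add ?_ ?_)
        · rw [abs_mul, abs_of_pos (inv_pos.2 ha)]
        · rw [abs_mul, abs_of_pos (exp_pos _)]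
          exact mul_le_mul_of_nonneg_right (hM x ⟨hx, le_rfl⟩) (exp_pos _).le
    _ ≤ a⁻¹ * (ε * a + 2 * M * x * exp (-η / a)) + M * exp (-x / a) := by
        gcongr
        exact abs_integral_exp_mul_sub_le ha hx hM hε hη
    _ = ε + 2 * M * x * (a⁻¹ * exp (-η / a)) + M * exp (-x / a) := by
        field_simp

theorem tendsto_inv_mul_expConv {u : ℝ → ℝ} (hu : ContinuousOn u (Icc 0 1)) {x : ℝ}
    (hx : x ∈ Ioc (0:ℝ) 1) : Tendsto (fun a => a⁻¹ * expConv a u x) (𝓝[>] 0) (𝓝 (u x)) := by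
  obtain ⟨M, hM⟩ := isCompact_Icc.exists_bound_of_continuousOn hu
  have hMx : ∀ s ∈ Icc 0 x, |u s| ≤ M := fun s hs => hM s ⟨hs.1, hs.2.trans hx.2⟩
  have hux : IntervalIntegrable u volume 0 x :=
    (hu.mono (by rw [uIcc_of_le hx.1.le]; exact Icc_subset_Icc le_rfl hx.2)).intervalIntegrable
  rw [Metric.tendsto_nhds]
  intro ε hε
  obtain ⟨η, hη, hcont⟩ := Metric.continuousWithinAt_iff.1 (hu x (Ioc_subset_Icc_self hx))
    (ε / 2) (half_pos hε)
  have hrest : Tendsto (fun a => 2 * M * x * (a⁻¹ * exp (-η / a)) + M * exp (-x / a))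
      (𝓝[>] 0) (𝓝 0) := by
    simpa [neg_div] using ((tendsto_inv_mul_exp_neg_div hη).const_mul (2 * M * x)).add
      (((tendsto_exp_neg_atTop_nhds_zero).comp (tendsto_const_div_nhdsGT_zero hx.1)).const_mul M)
  filter_upwards [hrest.eventually (gt_mem_nhds (half_pos hε)), self_mem_nhdsWithin]
    with a hsmall (ha : 0 < a)
  have hclose : ∀ s ∈ Icc 0 x, x - s < η → |u s - u x| ≤ ε / 2 := fun s hs hsx => by
    refine (hcont ⟨hs.1, hs.2.trans hx.2⟩ ?_).le
    rwa [Real.dist_eq, abs_sub_comm, abs_of_nonneg (sub_nonneg.2 hs.2)]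
  rw [Real.dist_eq]
  have := abs_inv_mul_expConv_sub_le ha hx.1.le hux hMx (half_pos hε).le hclose
  linarith

theorem tendsto_eLpNorm_inv_mul_expConv_sub {u : ℝ → ℝ} (hu : ContinuousOn u (Icc 0 1)) :
    Tendsto (fun a => eLpNorm (fun x => a⁻¹ * expConv a u x - u x) 2 (volume.restrict (Ioc 0 1)))
      (𝓝[>] 0) (𝓝 0) := by
  obtain ⟨M, hM⟩ := isCompact_Icc.exists_bound_of_continuousOn hu
  have huI : IntegrableOn u (Icc 0 1) := hu.integrableOn_compact isCompact_Icc
  refine tendsto_eLpNorm_of_dominated (C := 2 * M) ENNReal.ofNat_ne_top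
    (Eventually.of_forall fun a => ?_) ?_ ?_
  · exact (((continuousOn_const.mul (continuousOn_expConv huI a)).sub hu).mono
      Ioc_subset_Icc_self).aestronglyMeasurable measurableSet_Ioc
  · filter_upwards [self_mem_nhdsWithin] with a (ha : 0 < a)
    refine (ae_restrict_iff' measurableSet_Ioc).2 (ae_of_all _ fun x hx => ?_)
    have hMx : ∀ s ∈ Icc 0 x, |u s| ≤ M := fun s hs => hM s ⟨hs.1, hs.2.trans hx.2⟩
    have h1 := abs_expConv_le ha hx.1.le hMx
    have h2 := hMx x ⟨hx.1.le, le_rfl⟩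
    rw [Real.norm_eq_abs]
    calc |a⁻¹ * expConv a u x - u x| ≤ a⁻¹ * |expConv a u x| + |u x| :=
          (abs_sub _ _).trans_eq (by rw [abs_mul, abs_of_pos (inv_pos.2 ha)])
      _ ≤ a⁻¹ * (a * M) + M := by gcongr
      _ = 2 * M := by field_simp; ring
  · refine (ae_restrict_iff' measurableSet_Ioc).2 (ae_of_all _ fun x hx => ?_)
    simpa using (tendsto_inv_mul_expConv hu hx).sub_const (u x)

/-- `(a I + A)⁻¹ g`, the solution `v` of `a v(x) + ∫₀ˣ v = g(x)`. -/
noncomputable def volterraResolvent (a : ℝ) (g : ℝ → ℝ) (x : ℝ) : ℝ :=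
  g x / a - a⁻¹ ^ 2 * exp (-x / a) * ∫ s in (0:ℝ)..x, exp (s / a) * g s

theorem volterraResolvent_eq (a : ℝ) (g : ℝ → ℝ) :
    volterraResolvent a g = a⁻¹ • g - (a⁻¹ ^ 2) • expConv a g := by
  ext x
  rw [volterraResolvent, mul_assoc, exp_neg_div_mul_integral_eq_expConv, div_eq_inv_mul]
  rfl

theorem aestronglyMeasurable_volterraResolvent {g : ℝ → ℝ} (hg : IntegrableOn g (Icc 0 1))
    (a : ℝ) : AEStronglyMeasurable (volterraResolvent a g) (volume.restrict (Ioc 0 1)) := by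
  rw [volterraResolvent_eq]
  exact ((hg.mono_set Ioc_subset_Icc_self).aestronglyMeasurable.const_smul _).sub
    ((aestronglyMeasurable_expConv hg a).const_smul _)

theorem volterraResolvent_sub {g h : ℝ → ℝ} (hg : IntegrableOn g (Icc 0 1))
    (hh : IntegrableOn h (Icc 0 1)) (a : ℝ) {x : ℝ} (hx : x ∈ Icc (0:ℝ) 1) :
    volterraResolvent a (g - h) x = volterraResolvent a g x - volterraResolvent a h x := by
  simp only [volterraResolvent_eq, Pi.sub_apply, Pi.smul_apply, expConv_sub hg hh a hx, smul_eq_mul]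
  ring

theorem volterraResolvent_eq_of_contDiffOn {f : ℝ → ℝ} (hf : ContDiffOn ℝ 1 f (Icc 0 1))
    (hf0 : f 0 = 0) {a : ℝ} (ha : a ≠ 0) {x : ℝ} (hx : x ∈ Icc (0:ℝ) 1) :
    volterraResolvent a f x = a⁻¹ * expConv a (derivWithin f (Icc 0 1)) x := by
  have hsub : uIcc 0 x ⊆ Icc 0 1 := by
    rw [uIcc_of_le hx.1]
    exact Icc_subset_Icc le_rfl hx.2
  have hderiv : ∀ s ∈ uIcc 0 x,
      HasDerivWithinAt f (derivWithin f (Icc 0 1) s) (uIcc 0 x) s := fun s hs =>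
    ((hf.differentiableOn one_ne_zero s (hsub hs)).hasDerivWithinAt).mono hsub
  have hcont : ContinuousOn (derivWithin f (Icc 0 1)) (uIcc 0 x) :=
    (hf.continuousOn_derivWithin (uniqueDiffOn_Icc zero_lt_one) le_rfl).mono hsub
  rw [volterraResolvent_eq, Pi.sub_apply, Pi.smul_apply, Pi.smul_apply, smul_eq_mul, smul_eq_mul,
    expConv_eq_of_hasDerivWithinAt ha hf0 hderiv hcont.intervalIntegrable]
  field_simp
  ring

theorem eLpNorm_volterraResolvent_le {g : ℝ → ℝ} (hg : IntegrableOn g (Icc 0 1)) {a : ℝ}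
    (ha : 0 < a) :
    eLpNorm (volterraResolvent a g) 2 (volume.restrict (Ioc 0 1))
      ≤ ENNReal.ofReal (2 / a) * eLpNorm g 2 (volume.restrict (Ioc 0 1)) := by
  rw [volterraResolvent_eq]
  refine (eLpNorm_sub_le ((hg.mono_set Ioc_subset_Icc_self).aestronglyMeasurable.const_smul _)
    ((aestronglyMeasurable_expConv hg a).const_smul _) one_le_two).trans ?_
  rw [eLpNorm_const_smul, eLpNorm_const_smul, Real.enorm_of_nonneg (by positivity),
    Real.enorm_of_nonneg (by positivity)]
  calc ENNReal.ofReal a⁻¹ * eLpNorm g 2 (volume.restrict (Ioc 0 1))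
        + ENNReal.ofReal (a⁻¹ ^ 2) * eLpNorm (expConv a g) 2 (volume.restrict (Ioc 0 1))
      ≤ ENNReal.ofReal a⁻¹ * eLpNorm g 2 (volume.restrict (Ioc 0 1))
        + ENNReal.ofReal (a⁻¹ ^ 2)
          * (ENNReal.ofReal a * eLpNorm g 2 (volume.restrict (Ioc 0 1))) := by
        gcongr
        exact eLpNorm_expConv_le ha (hg.mono_set Ioc_subset_Icc_self).aestronglyMeasurable
    _ = ENNReal.ofReal (2 / a) * eLpNorm g 2 (volume.restrict (Ioc 0 1)) := by
        rw [← mul_assoc, ← ENNReal.ofReal_mul (by positivity), ← add_mul,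
          ← ENNReal.ofReal_add (by positivity) (by positivity)]
        congr 2
        field_simp
        ring

theorem eLpNorm_volterraResolvent_sub_deriv_le {f g : ℝ → ℝ} (hf : ContDiffOn ℝ 1 f (Icc 0 1))
    (hf0 : f 0 = 0) (hg : IntegrableOn g (Icc 0 1)) {a δ : ℝ} (ha : 0 < a)
    (hgf : eLpNorm (g - f) 2 (volume.restrict (Ioc 0 1)) ≤ ENNReal.ofReal δ) :
    eLpNorm (fun x => volterraResolvent a g x - deriv f x) 2 (volume.restrict (Ioc 0 1))
      ≤ ENNReal.ofReal (2 * (δ / a))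
        + eLpNorm (fun x => a⁻¹ * expConv a (derivWithin f (Icc 0 1)) x
            - derivWithin f (Icc 0 1) x) 2 (volume.restrict (Ioc 0 1)) := by
  set u := derivWithin f (Icc 0 1)
  have hu : ContinuousOn u (Icc 0 1) :=
    hf.continuousOn_derivWithin (uniqueDiffOn_Icc zero_lt_one) le_rfl
  have hfI : IntegrableOn f (Icc 0 1) := hf.continuousOn.integrableOn_compact isCompact_Icc
  have hsplit : (fun x => volterraResolvent a g x - deriv f x)
      =ᵐ[volume.restrict (Ioc 0 1)]
        volterraResolvent a (g - f) + fun x => a⁻¹ * expConv a u x - u x := by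
    rw [← Measure.restrict_congr_set Ioo_ae_eq_Ioc]
    refine (ae_restrict_iff' measurableSet_Ioo).2 (ae_of_all _ fun x hx => ?_)
    have hderiv : deriv f x = u x := (derivWithin_of_mem_nhds (Icc_mem_nhds hx.1 hx.2)).symm
    show volterraResolvent a g x - deriv f x
      = volterraResolvent a (g - f) x + (a⁻¹ * expConv a u x - u x)
    rw [volterraResolvent_sub hg hfI a (Ioo_subset_Icc_self hx),
      volterraResolvent_eq_of_contDiffOn hf hf0 ha.ne' (Ioo_subset_Icc_self hx), hderiv]
    ring
  have hmeas : AEStronglyMeasurable (fun x => a⁻¹ * expConv a u x - u x)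
      (volume.restrict (Ioc 0 1)) :=
    (((continuousOn_const.mul (continuousOn_expConv (hu.integrableOn_compact isCompact_Icc) a)).sub
      hu).mono Ioc_subset_Icc_self).aestronglyMeasurable measurableSet_Ioc
  rw [eLpNorm_congr_ae hsplit]
  refine (eLpNorm_add_le (aestronglyMeasurable_volterraResolvent (hg.sub hfI) a) hmeas
    one_le_two).trans ?_
  gcongr
  calc eLpNorm (volterraResolvent a (g - f)) 2 (volume.restrict (Ioc 0 1))
      ≤ ENNReal.ofReal (2 / a) * ENNReal.ofReal δ :=
        (eLpNorm_volterraResolvent_le (hg.sub hfI) ha).trans (by gcongr)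
    _ = ENNReal.ofReal (2 * (δ / a)) := by
        rw [← ENNReal.ofReal_mul (by positivity)]
        ring_nf

/-- Convergence theorem for stable differentiation: `f ∈ C¹([0,1])`, `f(0)=0`,
`u = f′`, noisy data `f_δ` with `‖f_δ − f‖ ≤ δ` for `δ ∈ (0,δ₀)`, and a
regularization parameter `α(δ) > 0` with `α(δ) → 0`, `δ/α(δ) → 0` as `δ → 0`.
Then `u_δ := (α(δ)I + A)⁻¹ f_δ` (given by the explicit solution formula)
satisfies `‖u_δ − u‖ → 0` as `δ → 0`. -/
theorem stable_differentiation_convergence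
    (f : ℝ → ℝ) (hf : ContDiffOn ℝ 1 f (Set.Icc 0 1)) (hf0 : f 0 = 0)
    (δ₀ : ℝ) (hδ₀ : 0 < δ₀) (fδ : ℝ → ℝ → ℝ) (α : ℝ → ℝ)
    (hfδmem : ∀ δ ∈ Set.Ioo 0 δ₀, MemLp (fδ δ) 2 (volume.restrict (Set.Ioc 0 1)))
    (hnoise : ∀ δ ∈ Set.Ioo 0 δ₀,
      eLpNorm (fδ δ - f) 2 (volume.restrict (Set.Ioc 0 1)) ≤ ENNReal.ofReal δ)
    (hαpos : ∀ δ ∈ Set.Ioo 0 δ₀, 0 < α δ)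
    (hα0 : Tendsto α (nhdsWithin 0 (Set.Ioi 0)) (nhds 0))
    (hδα : Tendsto (fun δ => δ / α δ) (nhdsWithin 0 (Set.Ioi 0)) (nhds 0)) :
    Tendsto (fun δ =>
        eLpNorm (fun x =>
            (fδ δ x / α δ -
              (α δ)⁻¹ ^ 2 * exp (-x / α δ) * ∫ s in (0:ℝ)..x, exp (s / α δ) * fδ δ s)
              - deriv f x) 2 (volume.restrict (Set.Ioc 0 1)))
      (nhdsWithin 0 (Set.Ioi 0)) (nhds 0) := by
  set u := derivWithin f (Icc 0 1)
  have hu : ContinuousOn u (Icc 0 1) :=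
    hf.continuousOn_derivWithin (uniqueDiffOn_Icc zero_lt_one) le_rfl
  have hα : Tendsto α (𝓝[>] 0) (𝓝[>] 0) :=
    tendsto_nhdsWithin_iff.2 ⟨hα0, eventually_of_mem (Ioo_mem_nhdsGT hδ₀) hαpos⟩
  have hlim : Tendsto (fun δ => ENNReal.ofReal (2 * (δ / α δ))
      + eLpNorm (fun x => (α δ)⁻¹ * expConv (α δ) u x - u x) 2 (volume.restrict (Ioc 0 1)))
      (𝓝[>] 0) (𝓝 0) := by
    simpa using (ENNReal.tendsto_ofReal (hδα.const_mul 2)).add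
      ((tendsto_eLpNorm_inv_mul_expConv_sub hu).comp hα)
  refine tendsto_of_tendsto_of_tendsto_of_le_of_le' tendsto_const_nhds hlim
    (Eventually.of_forall fun _ => zero_le) ?_
  filter_upwards [Ioo_mem_nhdsGT hδ₀] with δ hδ
  have hfδ : IntegrableOn (fδ δ) (Icc 0 1) :=
    (integrableOn_Icc_iff_integrableOn_Ioc).2 ((hfδmem δ hδ).integrable one_le_two)
  exact eLpNorm_volterraResolvent_sub_deriv_le hf hf0 hfδ (hαpos δ hδ) (hnoise δ hδ)
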